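/- Let (Σ,P) be a Kelvin–Planck theory and let Q := {(v,w) ∈ V(Σ) : ∫_Σ η dv ≥ ∫_Σ (1/T) dw for every Clausius–Duhem pair (η,T) of (Σ,P)}. For any member (v,w) of Q that is not a member of \hat{P}, there exists ν ∈ M₊(Σ) such that (v, w + ν) is a member of \hat{P}. -/

import Mathlib

open Set

noncomputable section

/-- Signed regular Borel measures on `X`, modeled via the Riesz representation
theorem as the weak-star dual of `C(X, ℝ)`. -/
abbrev Meas (X : Type*) [TopologicalSpace X] := WeakDual ℝ C(X, ℝ)

/-- The ambient space containing `V(X) = M°(X) ⊕ M(X)`; membership in the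
subspace `M°(X)` of the first component is expressed by `p.1 1 = 0`. -/
abbrev VSp (X : Type*) [TopologicalSpace X] := Meas X × Meas X

/-- The cone of nonnegative measures. -/
def PosMeas (X : Type*) [TopologicalSpace X] : Set (Meas X) :=
  {μ | ∀ f : C(X, ℝ), (∀ x, 0 ≤ f x) → 0 ≤ μ f}

variable {X : Type*} [TopologicalSpace X]

/-- The Dirac measure at a point, i.e. the evaluation functional. -/
def dirac (x : X) : Meas X :=
  (⟨⟨⟨fun f => f x, fun _ _ => rfl⟩, fun _ _ => rfl⟩,
    continuous_eval_const x⟩ : C(X, ℝ) →L[ℝ] ℝ)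

/-- The set of nonnegative multiples of members of `P`. -/
def coneOf (P : Set (VSp X)) : Set (VSp X) :=
  {x | ∃ c : ℝ, 0 ≤ c ∧ ∃ p ∈ P, x = c • p}

/-- `\hat P`, the weak-star closure of the cone generated by `P`. -/
def hatP (P : Set (VSp X)) : Set (VSp X) :=
  closure (coneOf P)

/-- A thermodynamical theory: processes have change of condition with total mass
zero (i.e. `P ⊆ V(X)`), and `\hat P` is convex. -/
def IsThermoTheory (P : Set (VSp X)) : Prop :=
  (∀ p ∈ P, p.1 (1 : C(X, ℝ)) = 0) ∧ Convex ℝ (hatP P)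

/-- A Kelvin–Planck theory: a thermodynamical theory with
`\hat P ∩ ({0} × M₊(X)) = {(0,0)}`. -/
def IsKelvinPlanck (P : Set (VSp X)) : Prop :=
  IsThermoTheory P ∧ hatP P ∩ (({0} : Set (Meas X)) ×ˢ PosMeas X) = {(0, 0)}

/-- A Clausius–Duhem pair `(η, T)` for the theory `P`: `η` and `T` are continuous,
`T` is strictly positive, and for every continuous `β` equal pointwise to `1/T`
(such a `β` exists, and is unique, by positivity of `T`), the Clausius–Duhem
inequality `∫ η d(Δm) ≥ ∫ (1/T) dq` holds for every process in `P`. -/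
def IsCDPair (P : Set (VSp X)) (η T : C(X, ℝ)) : Prop :=
  (∀ x, 0 < T x) ∧
    ∀ β : C(X, ℝ), (∀ x, β x = (T x)⁻¹) → ∀ p ∈ P, p.2 β ≤ p.1 η

/-- A Clausius–Duhem temperature scale. -/
def IsCDTemp (P : Set (VSp X)) (T : C(X, ℝ)) : Prop :=
  ∃ η : C(X, ℝ), IsCDPair P η T

/-- Two states are of the same hotness: both `(0, δ_a − δ_b)` and `(0, δ_b − δ_a)`
belong to `\hat P`. -/
def SameHotness (P : Set (VSp X)) (a b : X) : Prop :=
  ((0 : Meas X), dirac a - dirac b) ∈ hatP P ∧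
    ((0 : Meas X), dirac b - dirac a) ∈ hatP P

/-- The hotness level of a state. -/
def hotnessLevel (P : Set (VSp X)) (a : X) : Set X :=
  {b | SameHotness P a b}

/-- A subset of the state space that is a hotness level. -/
def IsHotnessLevel (P : Set (VSp X)) (h : Set X) : Prop :=
  ∃ a : X, h = hotnessLevel P a

/-- The (signed) measure `μ` is supported in the set `A`: `μ` annihilates every
continuous function vanishing on `A`. -/
def SuppIn (μ : Meas X) (A : Set X) : Prop :=
  ∀ f : C(X, ℝ), (∀ x ∈ A, f x = 0) → μ f = 0

/-- `\hat Q` contains a passive heat transfer from hotness level `h` to `h'`: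
an element `(0, μ − μ')` of `\hat Q` with `μ, μ'` nonnegative, `supp μ ⊆ h`,
`supp μ' ⊆ h'` and `μ(h) = μ'(h') > 0` (the common value being the total mass). -/
def IsPassiveHT (Q : Set (VSp X)) (h h' : Set X) : Prop :=
  ∃ μ μ' : Meas X, μ ∈ PosMeas X ∧ μ' ∈ PosMeas X ∧ SuppIn μ h ∧ SuppIn μ' h' ∧
    μ (1 : C(X, ℝ)) = μ' (1 : C(X, ℝ)) ∧ 0 < μ (1 : C(X, ℝ)) ∧
    ((0 : Meas X), μ - μ') ∈ hatP Q

/-- Hotness level `h'` is hotter than `h`: the levels are distinct and every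
thermodynamical theory whose closed process cone contains `P` together with a
passive heat transfer from `h` to `h'` fails to be a Kelvin–Planck theory. -/
def Hotter (P : Set (VSp X)) (h' h : Set X) : Prop :=
  h' ≠ h ∧ ∀ Pd : Set (VSp X), IsThermoTheory Pd → P ⊆ hatP Pd →
    IsPassiveHT Pd h h' → ¬ IsKelvinPlanck Pd

/-- State `a` is hotter than state `b`. -/
def HotterState (P : Set (VSp X)) (a b : X) : Prop :=
  Hotter P (hotnessLevel P a) (hotnessLevel P b)

/-- A Carnot element of the theory `P` operating between hotness levels `h'` and
`h`: a reversible cyclic element `(0, μ' − μ)` with `μ', μ` nonzero nonnegative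
measures supported in `h'`, `h` respectively. -/
def IsCarnotBetween (P : Set (VSp X)) (h' h : Set X) (p : VSp X) : Prop :=
  p ∈ hatP P ∧ -p ∈ hatP P ∧
    ∃ μ' μ : Meas X, μ' ∈ PosMeas X ∧ μ ∈ PosMeas X ∧ μ' ≠ 0 ∧ μ ≠ 0 ∧
      SuppIn μ' h' ∧ SuppIn μ h ∧ p = ((0 : Meas X), μ' - μ)

end

/-!
If no correction `ν ≥ 0` works, the compact convex hull of `(v, w)` and `{0} × Prob(X)` misses
the closed convex cone `\hat P`: Kelvin–Planck excludes the points `(0, π)`, and a point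
`(1 - t) (v, w) + t (0, π)` with `t < 1` rescales to `(v, w + t / (1 - t) π)`.
Hahn–Banach separates the two sets by a weak-star continuous functional, which is integration
against a pair `(η, β)` of continuous functions; it is nonnegative on `\hat P` and negative on
the hull. Negativity at `(0, δ_x)` gives `β < 0`, so `(η, -1/β)` is a Clausius–Duhem pair,
and `(v, w)` violates its inequality.
-/

open Set
open scoped Pointwise

section Separation

variable {E : Type*} [AddCommGroup E] [Module ℝ E]

theorem nonneg_of_forall_lt_of_smul_mem {C : Set E} (hC : ∀ c : ℝ, 0 < c → ∀ z ∈ C, c • z ∈ C)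
    (f : E →ₗ[ℝ] ℝ) {a : ℝ} (ha : ∀ z ∈ C, a < f z) {z : E} (hz : z ∈ C) : 0 ≤ f z := by
  by_contra! hneg
  have hc : 0 < (|a| + 1) / -f z := div_pos (by positivity) (neg_pos.2 hneg)
  have hval : f (((|a| + 1) / -f z) • z) = -(|a| + 1) := by
    rw [map_smul, smul_eq_mul]
    field_simp [hneg.ne]
  linarith [ha _ (hC _ hc z hz), neg_abs_le a]

theorem disjoint_convexHull_insert {C K : Set E} {x : E}
    (hC : ∀ c : ℝ, 0 < c → ∀ z ∈ C, c • z ∈ C) (hKconv : Convex ℝ K) (hKC : Disjoint K C)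
    (hx : x ∉ C) (hxK : ∀ t : ℝ, 0 ≤ t → ∀ k ∈ K, x + t • k ∉ C) :
    Disjoint (convexHull ℝ (insert x K)) C := by
  rcases K.eq_empty_or_nonempty with rfl | hne
  · simpa using hx
  rw [convexHull_insert hne, hKconv.convexHull_eq, disjoint_left]
  rintro _ hy hyC
  obtain ⟨_, rfl, k, hk, a, b, ha, hb, hab, rfl⟩ := mem_convexJoin.1 hy
  rcases ha.eq_or_lt with rfl | ha
  · rw [zero_add] at hab
    rw [hab, zero_smul, zero_add, one_smul] at hyC
    exact disjoint_left.1 hKC hk hyC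
  · refine hxK (b / a) (by positivity) k hk ?_
    convert hC a⁻¹ (inv_pos.2 ha) _ hyC using 1
    rw [smul_add, smul_smul, smul_smul, inv_mul_cancel₀ ha.ne', one_smul, div_eq_inv_mul]

variable [TopologicalSpace E] [IsTopologicalAddGroup E] [ContinuousSMul ℝ E]

theorem isCompact_convexHull_insert {K : Set E} (hKconv : Convex ℝ K) (hK : IsCompact K)
    (x : E) : IsCompact (convexHull ℝ (insert x K)) := by
  rcases K.eq_empty_or_nonempty with rfl | hne
  · simp
  have hjoin : convexJoin ℝ {x} K =
      (fun p : ℝ × E => x + p.1 • (p.2 - x)) '' (Icc 0 1 ×ˢ K) := by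
    ext y
    simp only [convexJoin_singleton_left, segment_eq_image', mem_iUnion, mem_image, mem_prod]
    constructor
    · rintro ⟨k, hk, t, ht, rfl⟩
      exact ⟨(t, k), ⟨ht, hk⟩, rfl⟩
    · rintro ⟨⟨t, k⟩, ⟨ht, hk⟩, rfl⟩
      exact ⟨k, hk, t, ht, rfl⟩
  rw [convexHull_insert hne, hKconv.convexHull_eq, hjoin]
  exact (isCompact_Icc.prod hK).image (by fun_prop)

theorem exists_strongDual_nonneg_on_and_neg_on_insert [LocallyConvexSpace ℝ E]
    {C K : Set E} {x : E} (hCconv : Convex ℝ C) (hCclosed : IsClosed C) (hC0 : 0 ∈ C)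
    (hC : ∀ c : ℝ, 0 < c → ∀ z ∈ C, c • z ∈ C) (hKconv : Convex ℝ K) (hK : IsCompact K)
    (hKC : Disjoint K C) (hx : x ∉ C) (hxK : ∀ t : ℝ, 0 ≤ t → ∀ k ∈ K, x + t • k ∉ C) :
    ∃ f : StrongDual ℝ E, (∀ z ∈ C, 0 ≤ f z) ∧ ∀ y ∈ insert x K, f y < 0 := by
  obtain ⟨f, u, v, hfs, huv, hfC⟩ := geometric_hahn_banach_compact_closed
    (convex_convexHull ℝ _) (isCompact_convexHull_insert hKconv hK x) hCconv hCclosed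
    (disjoint_convexHull_insert hC hKconv hKC hx hxK)
  have hv : v < 0 := by simpa using hfC 0 hC0
  exact ⟨f, fun z hz => nonneg_of_forall_lt_of_smul_mem hC f.toLinearMap hfC hz,
    fun y hy => (hfs y (subset_convexHull ℝ _ hy)).trans (huv.trans hv)⟩

end Separation

namespace WeakDual

variable {E F : Type*} [AddCommGroup E] [Module ℝ E] [TopologicalSpace E]
  [AddCommGroup F] [Module ℝ F] [TopologicalSpace F]

instance instLocallyConvexSpace : LocallyConvexSpace ℝ (WeakDual ℝ E) :=
  WeakBilin.locallyConvexSpace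

theorem exists_forall_apply_eq_apply (L : WeakDual ℝ E →L[ℝ] ℝ) :
    ∃ e : E, ∀ φ : WeakDual ℝ E, L φ = φ e := by
  obtain ⟨e, rfl⟩ := LinearMap.dualEmbedding_surjective (topDualPairing ℝ E) L
  exact ⟨e, fun _ => rfl⟩

theorem exists_forall_prod_apply_eq_add (L : WeakDual ℝ E × WeakDual ℝ F →L[ℝ] ℝ) :
    ∃ (e : E) (f : F), ∀ z : WeakDual ℝ E × WeakDual ℝ F, L z = z.1 e + z.2 f := by
  obtain ⟨e, he⟩ := exists_forall_apply_eq_apply (L ∘L .inl ℝ _ _)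
  obtain ⟨f, hf⟩ := exists_forall_apply_eq_apply (L ∘L .inr ℝ _ _)
  exact ⟨e, f, fun z => by rw [← he, ← hf, L.comp_inl_add_comp_inr]⟩

end WeakDual

section Measures

variable {X : Type*} [TopologicalSpace X]

theorem isClosed_posMeas : IsClosed (PosMeas X) := by
  have hinter : PosMeas X = ⋂ (f : C(X, ℝ)) (_ : ∀ x, 0 ≤ f x), {μ : Meas X | 0 ≤ μ f} := by
    ext μ
    simp [PosMeas]
  rw [hinter]
  exact isClosed_biInter fun f _ => isClosed_le continuous_const (WeakDual.eval_continuous f)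

theorem smul_mem_posMeas {c : ℝ} (hc : 0 ≤ c) {μ : Meas X} (hμ : μ ∈ PosMeas X) :
    c • μ ∈ PosMeas X :=
  fun f hf => mul_nonneg hc (hμ f hf)

theorem convex_posMeas : Convex ℝ (PosMeas X) :=
  fun _ hμ _ hν _ _ ha hb _ f hf =>
    add_nonneg (smul_mem_posMeas ha hμ f hf) (smul_mem_posMeas hb hν f hf)

theorem abs_apply_le_of_mem_posMeas [CompactSpace X] {μ : Meas X} (hμ : μ ∈ PosMeas X)
    (f : C(X, ℝ)) : |μ f| ≤ ‖f‖ * μ 1 := by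
  have hupper := hμ (‖f‖ • 1 - f) fun x => by
    simpa using (abs_le.1 (f.norm_coe_le_norm x)).2
  have hlower := hμ (‖f‖ • 1 + f) fun x => by
    simpa [neg_le_iff_add_nonneg'] using (abs_le.1 (f.norm_coe_le_norm x)).1
  simp only [map_sub, map_add, map_smul, smul_eq_mul] at hupper hlower
  exact abs_le.2 ⟨by linarith, by linarith⟩

variable (X) in
def ProbMeas : Set (Meas X) :=
  {μ | μ ∈ PosMeas X ∧ μ 1 = 1}

@[simp]
theorem dirac_apply (x : X) (f : C(X, ℝ)) : dirac x f = f x :=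
  rfl

theorem dirac_mem_probMeas (x : X) : dirac x ∈ ProbMeas X :=
  ⟨fun _ hf => hf x, rfl⟩

theorem convex_probMeas : Convex ℝ (ProbMeas X) :=
  fun μ hμ ν hν a b ha hb hab =>
    ⟨convex_posMeas hμ.1 hν.1 ha hb hab, by
      change a * μ 1 + b * ν 1 = 1
      rw [hμ.2, hν.2, mul_one, mul_one, hab]⟩

theorem isCompact_probMeas [CompactSpace X] : IsCompact (ProbMeas X) := by
  refine (WeakDual.isCompact_closedBall (𝕜 := ℝ) (E := C(X, ℝ)) 0 1).of_isClosed_subset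
    (isClosed_posMeas.inter (isClosed_eq (WeakDual.eval_continuous 1) continuous_const))
    fun μ hμ => ?_
  rw [mem_preimage, mem_closedBall_zero_iff]
  refine ContinuousLinearMap.opNorm_le_bound _ zero_le_one fun f => ?_
  simpa [hμ.2, mul_comm] using abs_apply_le_of_mem_posMeas hμ.1 f

theorem subset_hatP (P : Set (VSp X)) : P ⊆ hatP P :=
  fun p hp => subset_closure ⟨1, zero_le_one, p, hp, (one_smul ℝ p).symm⟩

theorem smul_mem_hatP {P : Set (VSp X)} {c : ℝ} (hc : 0 < c) {z : VSp X} (hz : z ∈ hatP P) :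
    c • z ∈ hatP P := by
  have hcone : c • coneOf P ⊆ coneOf P := by
    rintro _ ⟨_, ⟨c', hc', p, hp, rfl⟩, rfl⟩
    exact ⟨c * c', mul_nonneg hc.le hc', p, hp, smul_smul c c' p⟩
  have hcz : c • z ∈ closure (c • coneOf P) := by
    rw [closure_smul₀' hc.ne']
    exact smul_mem_smul_set hz
  exact closure_mono hcone hcz

theorem IsKelvinPlanck.zero_mem_hatP {P : Set (VSp X)} (hP : IsKelvinPlanck P) :
    (0 : VSp X) ∈ hatP P := by
  have h : (0 : VSp X) ∈ hatP P ∩ (({0} : Set (Meas X)) ×ˢ PosMeas X) := by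
    rw [hP.2]
    rfl
  exact h.1

theorem IsKelvinPlanck.eq_zero_of_mem_hatP {P : Set (VSp X)} (hP : IsKelvinPlanck P)
    {μ : Meas X} (hμ : μ ∈ PosMeas X) (h : ((0 : Meas X), μ) ∈ hatP P) : μ = 0 := by
  have h' : ((0 : Meas X), μ) ∈ hatP P ∩ (({0} : Set (Meas X)) ×ˢ PosMeas X) := ⟨h, rfl, hμ⟩
  rw [hP.2] at h'
  exact congrArg Prod.snd h'

theorem exists_isCDPair_of_forall_nonneg {P : Set (VSp X)} {η β : C(X, ℝ)}
    (hβ : ∀ x, β x < 0) (hP : ∀ p ∈ P, 0 ≤ p.1 η + p.2 β) :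
    ∃ T : C(X, ℝ), IsCDPair P η T ∧ ∀ x, (-β) x = (T x)⁻¹ := by
  let T : C(X, ℝ) := ⟨fun x => (-β x)⁻¹, (continuous_neg.comp β.continuous).inv₀ fun x => by
    simpa using (hβ x).ne⟩
  have hT : ∀ x, (-β) x = (T x)⁻¹ := fun x => (inv_inv _).symm
  refine ⟨T, ⟨fun x => inv_pos.2 (neg_pos.2 (hβ x)), fun β' hβ' p hp => ?_⟩, hT⟩
  obtain rfl : β' = -β := ContinuousMap.ext fun x => (hβ' x).trans (hT x).symm
  linarith [hP p hp, map_neg p.2 β]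

end Measures

theorem exists_pos_correction_into_hatP_general
    {X : Type*} [TopologicalSpace X] [CompactSpace X]
    (P : Set (VSp X)) (hP : IsKelvinPlanck P)
    (v w : Meas X)
    (hQ : ∀ η T β : C(X, ℝ), IsCDPair P η T → (∀ x, β x = (T x)⁻¹) →
      w β ≤ v η) :
    ∃ ν ∈ PosMeas X, ((v, w + ν) : VSp X) ∈ hatP P := by
  by_contra! hcorr
  have hKC : Disjoint ({0} ×ˢ ProbMeas X) (hatP P) := by
    refine disjoint_left.2 ?_
    rintro ⟨_, π⟩ ⟨rfl, hπ⟩ hπP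
    exact zero_ne_one (hP.eq_zero_of_mem_hatP hπ.1 hπP ▸ hπ.2)
  have hxK : ∀ t : ℝ, 0 ≤ t → ∀ k ∈ {0} ×ˢ ProbMeas X, ((v, w) : VSp X) + t • k ∉ hatP P := by
    rintro t ht ⟨_, π⟩ ⟨rfl, hπ⟩
    simpa using hcorr (t • π) (smul_mem_posMeas ht hπ.1)
  obtain ⟨f, hfP, hf⟩ := exists_strongDual_nonneg_on_and_neg_on_insert hP.1.2 isClosed_closure
    hP.zero_mem_hatP (fun _ hc _ hz => smul_mem_hatP hc hz)
    ((convex_singleton 0).prod convex_probMeas) (isCompact_singleton.prod isCompact_probMeas) hKC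
    (by simpa using hcorr 0 fun _ _ => le_rfl) hxK
  obtain ⟨η, β, hf_eq⟩ := WeakDual.exists_forall_prod_apply_eq_add f
  have hβ : ∀ x, β x < 0 := fun x => by
    have h := hf ((0 : Meas X), dirac x) (Or.inr ⟨rfl, dirac_mem_probMeas x⟩)
    rwa [hf_eq, dirac_apply, show (0 : Meas X) η = 0 from rfl, zero_add] at h
  obtain ⟨T, hT, hβT⟩ := exists_isCDPair_of_forall_nonneg hβ fun p hp =>
    hf_eq p ▸ hfP p (subset_hatP P hp)
  have hvw := hf _ (mem_insert _ _)
  rw [hf_eq] at hvw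
  linarith [hQ η T (-β) hT hβT, map_neg w β]

/-- **Remark.** Let `(X, P)` be a Kelvin–Planck theory.  If `(v, w) ∈ V(X)` complies
with the Clausius–Duhem inequality for every Clausius–Duhem pair but is not a member
of `\hat P`, then there exists `ν ∈ M₊(X)` such that `(v, w + ν) ∈ \hat P`. -/
theorem exists_pos_correction_into_hatP
    {X : Type*} [TopologicalSpace X] [CompactSpace X] [T2Space X]
    (P : Set (VSp X)) (hP : IsKelvinPlanck P)
    (v w : Meas X) (hv : v (1 : C(X, ℝ)) = 0)
    (hQ : ∀ η T β : C(X, ℝ), IsCDPair P η T → (∀ x, β x = (T x)⁻¹) →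
      w β ≤ v η)
    (hnot : ((v, w) : VSp X) ∉ hatP P) :
    ∃ ν ∈ PosMeas X, ((v, w + ν) : VSp X) ∈ hatP P :=
  exists_pos_correction_into_hatP_general P hP v w hQ
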